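/- arXiv:2302.04567 — 3 statements merged into one kernel-verified Lean document; each statement's English description precedes it below -/
import Mathlib

section
/- Let ψ : ℝⁿ → ℝ be convex with directional derivatives ψ′(0;d), let B be symmetric positive definite, and let d* be the unique minimizer of d ↦ ψ(d) + ½ dᵀBd. Then d* = 0 if and only if ψ′(0; d) ≥ 0 for all d ∈ ℝⁿ (i.e., 0 is a stationary point of ψ). -/
/-!
If `0` minimizes `ψ + ½ dᵀBd`, the one-sided difference quotients of this sum at `0` are
nonnegative, and the quadratic term contributes only `O(t)` to them, so `ψ′(0;d) ≥ 0`.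
Conversely, convexity bounds `ψ′(0;d)` by `ψ d - ψ 0`, so stationarity makes `0` a global
minimizer of `ψ`; then `ψ d* + ½ d*ᵀBd* ≤ ψ 0 ≤ ψ d*` forces `d*ᵀBd* ≤ 0`, i.e. `d* = 0`.
-/

open Matrix Filter Topology

theorem ConvexOn.le_sub_of_tendsto_slope {E : Type*} [AddCommGroup E] [Module ℝ E]
    {f : E → ℝ} (hf : ConvexOn ℝ Set.univ f) {x d : E} {L : ℝ}
    (hL : Tendsto (fun t : ℝ => (f (x + t • d) - f x) / t) (𝓝[>] 0) (𝓝 L)) :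
    L ≤ f (x + d) - f x := by
  refine le_of_tendsto hL ?_
  filter_upwards [Ioo_mem_nhdsGT (zero_lt_one' ℝ)] with t ⟨ht₀, ht₁⟩
  have hseg : f (x + t • d) ≤ (1 - t) * f x + t * f (x + d) := by
    have hpt : x + t • d = (1 - t) • x + t • (x + d) := by module
    simpa only [hpt, smul_eq_mul] using hf.2 (Set.mem_univ x) (Set.mem_univ (x + d))
      (sub_nonneg.2 ht₁.le) ht₀.le (sub_add_cancel 1 t)
  rw [div_le_iff₀ ht₀]
  linarith

theorem IsMinOn.nonneg_of_tendsto_slope {E : Type*} [AddCommGroup E] [Module ℝ E]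
    {f : E → ℝ} {x d : E} {L : ℝ} (hf : IsMinOn f Set.univ x)
    (hL : Tendsto (fun t : ℝ => (f (x + t • d) - f x) / t) (𝓝[>] 0) (𝓝 L)) :
    0 ≤ L := by
  refine ge_of_tendsto hL ?_
  filter_upwards [self_mem_nhdsWithin] with t (ht : 0 < t)
  exact div_nonneg (sub_nonneg.2 (hf (Set.mem_univ _))) ht.le

theorem Matrix.smul_dotProduct_mulVec_smul {ι : Type*} [Fintype ι] (B : Matrix ι ι ℝ)
    (t : ℝ) (d : ι → ℝ) :
    (t • d) ⬝ᵥ B *ᵥ (t • d) = t ^ 2 * (d ⬝ᵥ B *ᵥ d) := by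
  rw [mulVec_smul, dotProduct_smul, smul_dotProduct, smul_eq_mul, smul_eq_mul]
  ring

theorem Matrix.tendsto_dotProduct_mulVec_smul_div {ι : Type*} [Fintype ι]
    (B : Matrix ι ι ℝ) (d : ι → ℝ) :
    Tendsto (fun t : ℝ => (t • d) ⬝ᵥ B *ᵥ (t • d) / t) (𝓝 0) (𝓝 0) := by
  have hlin : Tendsto (fun t : ℝ => t * (d ⬝ᵥ B *ᵥ d)) (𝓝 0) (𝓝 0) := by
    simpa using (tendsto_id (x := 𝓝 (0 : ℝ))).mul_const (d ⬝ᵥ B *ᵥ d)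
  refine hlin.congr fun t => ?_
  rw [smul_dotProduct_mulVec_smul]
  rcases eq_or_ne t 0 with rfl | ht
  · simp
  · field_simp

/-- with `ψ` convex admitting directional derivatives `D d = ψ′(0;d)`,
`B ≻ 0`, and `d*` a minimizer of `ψ(d) + ½dᵀBd`, we have `d* = 0` iff `0` is a
stationary point of `ψ`, i.e. all directional derivatives at `0` are nonnegative. -/
theorem min_zero_iff_stationary {n : ℕ}
    (ψ : (Fin n → ℝ) → ℝ) (hψ : ConvexOn ℝ Set.univ ψ)
    (D : (Fin n → ℝ) → ℝ)
    (hD : ∀ d : Fin n → ℝ, Filter.Tendsto (fun t : ℝ => (ψ (t • d) - ψ 0) / t)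
      (nhdsWithin 0 (Set.Ioi 0)) (nhds (D d)))
    (B : Matrix (Fin n) (Fin n) ℝ) (hB : B.PosDef)
    (dstar : Fin n → ℝ)
    (hmin : IsMinOn (fun d : Fin n → ℝ => ψ d + (1 / 2) * (d ⬝ᵥ B.mulVec d)) Set.univ dstar) :
    dstar = 0 ↔ ∀ d : Fin n → ℝ, 0 ≤ D d := by
  constructor
  · rintro rfl d
    refine hmin.nonneg_of_tendsto_slope (d := d) ?_
    have hquad := (B.tendsto_dotProduct_mulVec_smul_div d).mono_left
      (nhdsWithin_le_nhds (s := Set.Ioi 0))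
    have hsum := (hD d).add (hquad.const_mul (1 / 2))
    rw [mul_zero, add_zero] at hsum
    refine hsum.congr fun t => ?_
    simp only [zero_add, mulVec_zero, dotProduct_zero, mul_zero, add_zero]
    ring
  · intro hstat
    have hψmin : ∀ d, ψ 0 ≤ ψ d := fun d => by
      have hle := hψ.le_sub_of_tendsto_slope (x := 0) (d := d) (by simpa using hD d)
      rw [zero_add] at hle
      linarith [hstat d]
    have hval : ψ dstar + 1 / 2 * (dstar ⬝ᵥ B *ᵥ dstar) ≤ ψ 0 := by
      simpa using hmin (Set.mem_univ 0)
    by_contra hne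
    have hpos : 0 < dstar ⬝ᵥ B *ᵥ dstar := by simpa using hB.dotProduct_mulVec_pos hne
    linarith [hψmin dstar]
end

section
/- Let ρ′ > 0, ε ∈ (0,1), a := gᵀd, q := gᵀd + ½ dᵀBd with dᵀBd > 0, and Δv ≥ 0. Define Δl(ρ) := −ρ a + Δv. Suppose Δl(ρ′) < ε Δv. Then a > (1−ε)Δv/ρ′ > 0 (assuming Δv > 0), the quantity ζ := (1−ε)Δv / q is positive, and for any ρ₊ with 0 < ρ₊ ≤ ζ one has Δl(ρ₊) ≥ ε Δv. -/
/-- penalty parameter update analysis. With `a = gᵀd`,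
`q = gᵀd + ½dᵀBd` (where `dᵀBd > 0`), `Δv > 0`, `Δl(ρ) = −ρa + Δv`, and
`Δl(ρ′) < εΔv`, we get `a > (1−ε)Δv/ρ′ > 0`, `ζ = (1−ε)Δv/q > 0`, and
`Δl(ρ₊) ≥ εΔv` for all `0 < ρ₊ ≤ ζ`. -/
theorem penalty_update_analysis (ρ' ε a q Δv dBd : ℝ)
    (hρ' : 0 < ρ') (hε : ε ∈ Set.Ioo (0 : ℝ) 1)
    (hdBd : 0 < dBd) (hq : q = a + (1 / 2) * dBd)
    (hΔv : 0 < Δv)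
    (hred : -ρ' * a + Δv < ε * Δv) :
    (1 - ε) * Δv / ρ' < a ∧ 0 < (1 - ε) * Δv / ρ' ∧
    0 < (1 - ε) * Δv / q ∧
    ∀ ρp : ℝ, 0 < ρp → ρp ≤ (1 - ε) * Δv / q → -ρp * a + Δv ≥ ε * Δv := by
  obtain ⟨hε0, hε1⟩ := hε
  have h1ε : 0 < 1 - ε := by linarith
  have hkey : (1 - ε) * Δv < ρ' * a := by nlinarith
  have ha1 : (1 - ε) * Δv / ρ' < a := by
    rw [div_lt_iff₀ hρ']; nlinarith
  have hpos : 0 < (1 - ε) * Δv / ρ' := by positivity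
  have ha : 0 < a := lt_trans hpos ha1
  have hqa : a ≤ q := by nlinarith
  have hqpos : 0 < q := lt_of_lt_of_le ha hqa
  refine ⟨ha1, hpos, by positivity, fun ρp hρp hle => ?_⟩
  have : ρp * q ≤ (1 - ε) * Δv := by
    rw [le_div_iff₀ hqpos] at hle
    · linarith [hle]
  nlinarith
end

section
/- Let φ_k := ρ_{k+1}(f(x_k) − f_min) + v(x_k) where f_min ≤ f(x) for all iterates, v ≥ 0, the penalty parameters satisfy 0 < ρ_{k+2} ≤ ρ_{k+1}, and the Armijo condition ρ_{k+1}f(x_{k+1}) + v(x_{k+1}) − (ρ_{k+1}f(x_k) + v(x_k)) ≤ −η α_k Δ_k holds with η, α_k, Δ_k ≥ 0. Then φ_{k+1} − φ_k ≤ −η α_k Δ_k; in particular the sequence {φ_k} is nonincreasing. -/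
/-- Lemma 5.4: monotone decrease of the shifted penalty
`φ_k = ρ_{k+1}(f(x_k) − f_min) + v(x_k)`. -/
theorem shifted_penalty_decrease
    (f v ρ α Δ : ℕ → ℝ) (fmin η : ℝ)
    (hfmin : ∀ k, fmin ≤ f k)
    (hv : ∀ k, 0 ≤ v k)
    (hρpos : ∀ k, 0 < ρ k)
    (hρmono : ∀ k, ρ (k + 2) ≤ ρ (k + 1))
    (hη : 0 ≤ η) (hα : ∀ k, 0 ≤ α k) (hΔ : ∀ k, 0 ≤ Δ k)
    (harmijo : ∀ k, ρ (k + 1) * f (k + 1) + v (k + 1) - (ρ (k + 1) * f k + v k)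
      ≤ -(η * α k * Δ k)) :
    (∀ k, (ρ (k + 2) * (f (k + 1) - fmin) + v (k + 1)) -
        (ρ (k + 1) * (f k - fmin) + v k) ≤ -(η * α k * Δ k)) ∧
    Antitone (fun k => ρ (k + 1) * (f k - fmin) + v k) := by
  have key : ∀ k, (ρ (k + 2) * (f (k + 1) - fmin) + v (k + 1)) -
      (ρ (k + 1) * (f k - fmin) + v k) ≤ -(η * α k * Δ k) := by
    intro k
    have h1 : ρ (k + 2) * (f (k + 1) - fmin) ≤ ρ (k + 1) * (f (k + 1) - fmin) :=
      mul_le_mul_of_nonneg_right (hρmono k) (by linarith [hfmin (k + 1)])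
    have h2 := harmijo k
    nlinarith
  refine ⟨key, antitone_nat_of_succ_le fun k => ?_⟩
  have := key k
  have h0 : 0 ≤ η * α k * Δ k := mul_nonneg (mul_nonneg hη (hα k)) (hΔ k)

  linarith
end
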